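/- Let ρ ≥ 3 and let α₁, …, α_ρ ∈ ℂ be ℚ-linearly independent. Then there exists c > 0 such that for every real Y ≥ 1 there is a nonzero integer vector b = (b₁,…,b_ρ) ∈ ℤ^ρ with |Σ_j α_j b_j| ≤ 1/Y and ‖b‖₂ ≤ c·Y^{2/(ρ−2)}. -/

import Mathlib

/-- The point of `ℝ^ρ` (with Euclidean norm) corresponding to an integer vector. -/
def latticeVec (ρ : ℕ) (b : Fin ρ → ℤ) : EuclideanSpace ℝ (Fin ρ) := WithLp.toLp 2 (fun i => (b i : ℝ))

/-!
Dirichlet's box principle. With `A = 1 + ∑ |α_j|`, the `(N + 1)^ρ` values `∑ α_j b_j` for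
`b ∈ [0, N]^ρ` lie in a square of side `2AN`; cut into cells of side `1/(2Y)`, it has about
`(4ANY)²` cells, so once `N^(ρ-2) ≳ 49 A² Y²` two values share a cell and the difference of the
two vectors is the required `b`, with `‖b‖₂ ≤ √ρ N`. The smallest such `N` is of order
`(A² Y²)^(1/(ρ-2))`.
-/

open Finset

theorem EuclideanSpace.norm_le_sqrt_card_mul {ι : Type*} [Fintype ι] (x : EuclideanSpace ℝ ι)
    {M : ℝ} (hM : 0 ≤ M) (hx : ∀ i, ‖x i‖ ≤ M) : ‖x‖ ≤ √(Fintype.card ι) * M := by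
  calc ‖x‖ = √(∑ i, ‖x i‖ ^ 2) := EuclideanSpace.norm_eq x
    _ ≤ √(∑ _ : ι, M ^ 2) := by gcongr with i; exact hx i
    _ = √(Fintype.card ι) * M := by
      rw [sum_const, card_univ, nsmul_eq_mul, Real.sqrt_mul (by positivity), Real.sqrt_sq hM]

theorem norm_latticeVec_le {ρ N : ℕ} {b : Fin ρ → ℤ} (hb : ∀ i, |b i| ≤ N) :
    ‖latticeVec ρ b‖ ≤ √ρ * N := by
  simpa using EuclideanSpace.norm_le_sqrt_card_mul (latticeVec ρ b) N.cast_nonneg fun i => by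
    simpa [latticeVec] using (Int.cast_le (R := ℝ)).2 (hb i)

theorem Int.floor_div_mem_Icc {t δ : ℝ} {K : ℕ} (hδ : 0 < δ) (ht : |t| ≤ K * δ) :
    ⌊t / δ⌋ ∈ Icc (-(K : ℤ)) K := by
  obtain ⟨hlo, hhi⟩ := abs_le.1 ht
  rw [mem_Icc, Int.le_floor, ← Int.lt_add_one_iff, Int.floor_lt, le_div_iff₀ hδ, div_lt_iff₀ hδ]
  push_cast
  constructor <;> linarith

theorem abs_sub_lt_of_floor_div_eq {s t δ : ℝ} (hδ : 0 < δ) (h : ⌊s / δ⌋ = ⌊t / δ⌋) :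
    |s - t| < δ := by
  have := Int.abs_sub_lt_one_of_floor_eq_floor h
  rwa [← sub_div, abs_div, abs_of_pos hδ, div_lt_one hδ] at this

/-- Cut the square `[-Kδ, Kδ]²` into `(2K+1)²` cells of side `δ`. -/
theorem Complex.exists_ne_norm_sub_lt_of_card_lt {β : Type*} {s : Finset β} {f : β → ℂ}
    {K : ℕ} {δ : ℝ} (hδ : 0 < δ) (hf : ∀ x ∈ s, ‖f x‖ ≤ K * δ) (hs : (2 * K + 1) ^ 2 < #s) :
    ∃ x ∈ s, ∃ y ∈ s, x ≠ y ∧ ‖f x - f y‖ < 2 * δ := by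
  set cell : β → ℤ × ℤ := fun x => (⌊(f x).re / δ⌋, ⌊(f x).im / δ⌋)
  set box := Icc (-(K : ℤ)) K
  have hbox : #(box ×ˢ box) < #s := by
    rwa [card_product, Int.card_Icc, ← sq, show (K + 1 - -K : ℤ).toNat = 2 * K + 1 by omega]
  have hmaps : ∀ x ∈ s, cell x ∈ box ×ˢ box := fun x hx =>
    mem_product.2 ⟨Int.floor_div_mem_Icc hδ ((abs_re_le_norm _).trans (hf x hx)),
      Int.floor_div_mem_Icc hδ ((abs_im_le_norm _).trans (hf x hx))⟩
  obtain ⟨x, hx, y, hy, hxy, hcell⟩ := exists_ne_map_eq_of_card_lt_of_maps_to hbox hmaps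
  have hre := abs_sub_lt_of_floor_div_eq hδ (congrArg Prod.fst hcell)
  have him := abs_sub_lt_of_floor_div_eq hδ (congrArg Prod.snd hcell)
  refine ⟨x, hx, y, hy, hxy, ?_⟩
  calc ‖f x - f y‖ ≤ |(f x - f y).re| + |(f x - f y).im| := norm_le_abs_re_add_abs_im _
    _ < 2 * δ := by rw [sub_re, sub_im]; linarith

theorem norm_sum_mul_intCast_le {ι : Type*} [Fintype ι] (α : ι → ℂ) {b : ι → ℤ} {N : ℕ}
    (hb : ∀ i, |b i| ≤ N) : ‖∑ i, α i * b i‖ ≤ (∑ i, ‖α i‖) * N := by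
  rw [sum_mul]
  refine (norm_sum_le _ _).trans (sum_le_sum fun i _ => ?_)
  rw [norm_mul, Complex.norm_intCast]
  gcongr
  exact_mod_cast hb i

theorem exists_ne_zero_norm_sum_mul_intCast_lt {ι : Type*} [Fintype ι] (α : ι → ℂ) {N K : ℕ}
    {Y : ℝ} (hY : 0 < Y) (hK : 2 * (∑ i, ‖α i‖) * N * Y ≤ K)
    (hcard : (2 * K + 1) ^ 2 < (N + 1) ^ Fintype.card ι) :
    ∃ b : ι → ℤ, b ≠ 0 ∧ (∀ i, |b i| ≤ N) ∧ ‖∑ i, α i * b i‖ < 1 / Y := by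
  classical
  set box := Fintype.piFinset fun _ : ι => Icc (0 : ℤ) N
  have hbox : #box = (N + 1) ^ Fintype.card ι := by simp [box]
  have hbound : ∀ b ∈ box, ‖∑ i, α i * b i‖ ≤ K * (1 / (2 * Y)) := by
    intro b hb
    have hbN : ∀ i, |b i| ≤ N := fun i => by
      have := mem_Icc.1 (Fintype.mem_piFinset.1 hb i); rw [abs_le]; omega
    rw [mul_one_div, le_div_iff₀ (by positivity)]
    nlinarith [norm_sum_mul_intCast_le α hbN]
  obtain ⟨b₁, hb₁, b₂, hb₂, hne, hlt⟩ :=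
    Complex.exists_ne_norm_sub_lt_of_card_lt (by positivity) hbound (hbox ▸ hcard)
  refine ⟨b₁ - b₂, sub_ne_zero.2 hne, fun i => ?_, ?_⟩
  · have h₁ := mem_Icc.1 (Fintype.mem_piFinset.1 hb₁ i)
    have h₂ := mem_Icc.1 (Fintype.mem_piFinset.1 hb₂ i)
    rw [Pi.sub_apply, abs_le]; omega
  · rw [mul_one_div, div_mul_cancel_left₀ two_ne_zero] at hlt
    simpa [← sum_sub_distrib, mul_sub] using hlt

theorem exists_ne_zero_norm_sum_mul_intCast_lt_of_sq_lt {ι : Type*} [Fintype ι] (α : ι → ℂ)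
    {A Y : ℝ} {N : ℕ} (hA : ∑ i, ‖α i‖ ≤ A) (hANY : 1 ≤ A * N * Y)
    (hcard : 49 * (A * N * Y) ^ 2 < (N + 1) ^ Fintype.card ι) :
    ∃ b : ι → ℤ, b ≠ 0 ∧ (∀ i, |b i| ≤ N) ∧ ‖∑ i, α i * b i‖ < 1 / Y := by
  have hAN : 0 ≤ A * N := mul_nonneg ((sum_nonneg fun i _ => norm_nonneg _).trans hA) N.cast_nonneg
  have hY : 0 < Y := pos_of_mul_pos_right (one_pos.trans_le hANY) hAN
  set K := ⌈2 * A * N * Y⌉₊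
  have hK : (2 * K + 1 : ℝ) ≤ 7 * (A * N * Y) := by
    linarith [Nat.ceil_lt_add_one (show 0 ≤ 2 * A * N * Y by linarith)]
  refine exists_ne_zero_norm_sum_mul_intCast_lt α (K := K) hY ?_ ?_
  · calc 2 * (∑ i, ‖α i‖) * N * Y ≤ 2 * A * N * Y := by gcongr
      _ ≤ (K : ℝ) := Nat.le_ceil _
  · have : ((2 * K + 1) ^ 2 : ℝ) < (N + 1) ^ Fintype.card ι := by nlinarith
    exact_mod_cast this

theorem exists_nat_pow_ge_le_two_mul_rpow {n : ℕ} (hn : n ≠ 0) {x : ℝ} (hx : 1 ≤ x) :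
    ∃ N : ℕ, 0 < N ∧ x ≤ N ^ n ∧ (N : ℝ) ≤ 2 * x ^ (n⁻¹ : ℝ) := by
  set r := x ^ (n⁻¹ : ℝ)
  have hr : 1 ≤ r := Real.one_le_rpow hx (by positivity)
  refine ⟨⌈r⌉₊, Nat.ceil_pos.2 (by linarith), ?_, ?_⟩
  · calc x = r ^ n := (Real.rpow_inv_natCast_pow (by linarith) hn).symm
      _ ≤ ⌈r⌉₊ ^ n := by gcongr; exact Nat.le_ceil r
  · linarith [Nat.ceil_lt_add_one (show 0 ≤ r by linarith)]

theorem exists_good_approximation_general (ρ : ℕ) (hρ : 3 ≤ ρ) (α : Fin ρ → ℂ) :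
    ∃ c > (0 : ℝ), ∀ Y : ℝ, 1 ≤ Y →
      ∃ b : Fin ρ → ℤ, b ≠ 0 ∧
        ‖∑ j, α j * (b j : ℂ)‖ ≤ 1 / Y ∧
        ‖latticeVec ρ b‖ ≤ c * Y ^ (2 / ((ρ : ℝ) - 2)) := by
  set A := ∑ j, ‖α j‖ + 1
  have hA : 1 ≤ A := by linarith [sum_nonneg fun j (_ : j ∈ univ) => norm_nonneg (α j)]
  have hexp : (((ρ - 2 : ℕ) : ℝ))⁻¹ = 1 / ((ρ : ℝ) - 2) := by
    rw [Nat.cast_sub (by omega), one_div, Nat.cast_ofNat]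
  refine ⟨√ρ * 2 * (49 * A ^ 2) ^ (1 / ((ρ : ℝ) - 2)), by positivity, fun Y hY => ?_⟩
  obtain ⟨N, hN0, hNpow, hN⟩ := exists_nat_pow_ge_le_two_mul_rpow (n := ρ - 2) (by omega)
    (x := 49 * A ^ 2 * Y ^ 2) (by nlinarith [one_le_pow₀ (n := 2) hA, one_le_pow₀ (n := 2) hY])
  have hN1 : (1 : ℝ) ≤ N := by exact_mod_cast hN0
  have hcard : 49 * (A * N * Y) ^ 2 < ((N : ℝ) + 1) ^ ρ := by
    calc (49 : ℝ) * (A * N * Y) ^ 2 = 49 * A ^ 2 * Y ^ 2 * N ^ 2 := by ring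
      _ ≤ (N : ℝ) ^ (ρ - 2) * N ^ 2 := by gcongr
      _ = (N : ℝ) ^ ρ := by rw [← pow_add, Nat.sub_add_cancel (by omega)]
      _ < (N + 1) ^ ρ := pow_lt_pow_left₀ (lt_add_one _) N.cast_nonneg (by omega)
  obtain ⟨b, hb0, hbN, hb⟩ := exists_ne_zero_norm_sum_mul_intCast_lt_of_sq_lt α (lt_add_one _).le
    (one_le_mul_of_one_le_of_one_le (one_le_mul_of_one_le_of_one_le hA hN1) hY)
    (by rwa [Fintype.card_fin])
  refine ⟨b, hb0, hb.le, ?_⟩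
  calc ‖latticeVec ρ b‖ ≤ √ρ * N := norm_latticeVec_le hbN
    _ ≤ √ρ * (2 * (49 * A ^ 2 * Y ^ 2) ^ (1 / ((ρ : ℝ) - 2))) := by rw [← hexp]; gcongr
    _ = _ := by
      rw [Real.mul_rpow (by positivity) (by positivity), ← Real.rpow_natCast Y 2,
        ← Real.rpow_mul (by linarith), Nat.cast_ofNat, mul_one_div]
      ring

/-- Let `ρ ≥ 3` and `α₁, …, α_ρ ∈ ℂ` be `ℚ`-linearly independent. There is `c > 0`
such that for every real `Y ≥ 1` there is a nonzero `b ∈ ℤ^ρ` with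
`|Σ_j α_j b_j| ≤ 1/Y` and `‖b‖₂ ≤ c·Y^{2/(ρ-2)}`. -/
theorem exists_good_approximation (ρ : ℕ) (hρ : 3 ≤ ρ) (α : Fin ρ → ℂ)
    (hα : LinearIndependent ℚ α) :
    ∃ c > (0 : ℝ), ∀ Y : ℝ, 1 ≤ Y →
      ∃ b : Fin ρ → ℤ, b ≠ 0 ∧
        ‖∑ j, α j * (b j : ℂ)‖ ≤ 1 / Y ∧
        ‖latticeVec ρ b‖ ≤ c * Y ^ (2 / ((ρ : ℝ) - 2)) :=
  exists_good_approximation_general ρ hρ α
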